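/- For fixed γ ∈ [0, σ_max(F)), the partial derivative of 𝔄(q,γ) := (1/2)·ln det(I_ℓ − qΛ) − (ℓ/2)·ln(1 − qγ²) with respect to q at any q ∈ [0, σ_max(F)^{−2}) equals ℓ·(γ² − 𝒩(q)²) / (2·(1 − qγ²)·(1 − q·𝒩(q)²)). -/

import Mathlib

open MeasureTheory Real Matrix

/-- The largest singular value of `F`: the supremum of `‖F w‖` over unit vectors. -/
noncomputable def sigmaMax {s ℓ : ℕ} (F : Matrix (Fin s) (Fin ℓ) ℝ) : ℝ :=
  sSup {x : ℝ | ∃ w : Fin ℓ → ℝ, (∑ i, (w i)^2) = 1 ∧ x = Real.sqrt (∑ j, (F.mulVec w j)^2)}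

/-- `S(q) = (I − qΛ)⁻¹` with `Λ = FᵀF`. -/
noncomputable def Sq {s ℓ : ℕ} (F : Matrix (Fin s) (Fin ℓ) ℝ) (q : ℝ) :
    Matrix (Fin ℓ) (Fin ℓ) ℝ :=
  (1 - q • (Fᵀ * F))⁻¹

/-- `𝒜(q) = −(1/2)·ln det(ℓ·S(q)/Tr S(q))`. -/
noncomputable def Afun {s ℓ : ℕ} (F : Matrix (Fin s) (Fin ℓ) ℝ) (q : ℝ) : ℝ :=
  -(1 / 2) * Real.log ((((ℓ : ℝ) / (Sq F q).trace) • Sq F q).det)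

/-- `𝒩(q) = sqrt(Tr(Λ·S(q))/Tr S(q))`. -/
noncomputable def Nfun {s ℓ : ℕ} (F : Matrix (Fin s) (Fin ℓ) ℝ) (q : ℝ) : ℝ :=
  Real.sqrt ((Fᵀ * F * Sq F q).trace / (Sq F q).trace)

/-- `𝔄(q,γ) = (1/2)·ln det(I − qΛ) − (ℓ/2)·ln(1 − qγ²)`. -/
noncomputable def AAfun {s ℓ : ℕ} (F : Matrix (Fin s) (Fin ℓ) ℝ) (q γ : ℝ) : ℝ :=
  (1 / 2) * Real.log (1 - q • (Fᵀ * F)).det - ((ℓ : ℝ) / 2) * Real.log (1 - q * γ^2)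

/-!
Diagonalising `Λ = FᵀF` gives `det (I - tΛ) = ∏ (1 - t μᵢ)`, so `t ↦ log det (I - tΛ)` has
derivative `-Tr (Λ S(q))` at `q`. Put `a = Tr (Λ S(q))` and `b = Tr S(q)`; the identity
`(I - qΛ) S(q) = I` gives `b - q a = ℓ`, hence `𝒩(q)² = a / b` and `1 - q 𝒩(q)² = ℓ / b`, and the
claimed formula becomes `-a / 2 + ℓ γ² / (2 (1 - q γ²))`. Every eigenvalue `μᵢ` and `γ²` is at
most `σ_max(F)²`, which keeps all the logarithms away from their singularities.
-/

namespace Matrix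

lemma posSemidef_transpose_mul_self {m n : Type*} [Fintype m] [Fintype n] (F : Matrix m n ℝ) :
    (Fᵀ * F).PosSemidef := by
  simpa using posSemidef_conjTranspose_mul_self F

lemma trace_inv_one_sub_smul {n R : Type*} [Fintype n] [DecidableEq n] [CommRing R]
    {A : Matrix n n R} {t : R} (ht : IsUnit (1 - t • A).det) :
    ((1 - t • A)⁻¹).trace = Fintype.card n + t * (A * (1 - t • A)⁻¹).trace := by
  have h := congrArg trace (mul_nonsing_inv (1 - t • A) ht)
  rw [sub_mul, one_mul, smul_mul_assoc, trace_sub, trace_smul, trace_one, smul_eq_mul] at h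
  linear_combination h

namespace IsHermitian

variable {n : Type*} [Fintype n] [DecidableEq n] {A : Matrix n n ℝ}

lemma det_cfc (hA : A.IsHermitian) (f : ℝ → ℝ) :
    (cfc f A).det = ∏ i, f (hA.eigenvalues i) := by
  simp [hA.cfc_eq, IsHermitian.cfc, -Unitary.conjStarAlgAut_apply]

lemma trace_cfc (hA : A.IsHermitian) (f : ℝ → ℝ) :
    (cfc f A).trace = ∑ i, f (hA.eigenvalues i) := by
  simp [hA.cfc_eq, IsHermitian.cfc, -Unitary.conjStarAlgAut_apply]

lemma cfc_one_sub_mul (hA : A.IsHermitian) (t : ℝ) :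
    cfc (fun x => 1 - t * x) A = 1 - t • A := by
  rw [cfc_sub .., cfc_const_one .., cfc_const_mul_id ..]

lemma det_one_sub_smul (hA : A.IsHermitian) (t : ℝ) :
    (1 - t • A).det = ∏ i, (1 - t * hA.eigenvalues i) := by
  rw [← hA.cfc_one_sub_mul, hA.det_cfc]

lemma trace_mul_inv_one_sub_smul (hA : A.IsHermitian) {t : ℝ}
    (ht : ∀ i, 1 - t * hA.eigenvalues i ≠ 0) :
    (A * (1 - t • A)⁻¹).trace = ∑ i, hA.eigenvalues i / (1 - t * hA.eigenvalues i) := by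
  have hspec : ∀ x ∈ spectrum ℝ A, 1 - t * x ≠ 0 := by
    rintro x hx
    obtain ⟨i, rfl⟩ := hA.spectrum_real_eq_range_eigenvalues ▸ hx
    exact ht i
  have hmul : A * cfc (fun x => (1 - t * x)⁻¹) A = cfc (fun x => x * (1 - t * x)⁻¹) A := by
    rw [cfc_mul .., cfc_id' ..]
  rw [nonsing_inv_eq_ringInverse, ← hA.cfc_one_sub_mul, ← cfc_inv _ _ hspec, hmul, hA.trace_cfc]
  rfl

lemma hasDerivAt_log_det_one_sub_smul (hA : A.IsHermitian) {q : ℝ}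
    (hq : (1 - q • A).det ≠ 0) :
    HasDerivAt (fun t => log (1 - t • A).det) (-(A * (1 - q • A)⁻¹).trace) q := by
  set μ := hA.eigenvalues
  have hq' : ∀ i, 1 - q * μ i ≠ 0 := by
    rw [hA.det_one_sub_smul] at hq
    exact fun i => Finset.prod_ne_zero_iff.mp hq i (Finset.mem_univ i)
  have hnear : ∀ᶠ t in nhds q, ∀ i, 1 - t * μ i ≠ 0 := Filter.eventually_all.2 fun i =>
    (continuous_const.sub (continuous_id.mul continuous_const)).continuousAt.eventually_ne (hq' i)
  have hsum : HasDerivAt (fun t => ∑ i, log (1 - t * μ i)) (∑ i, -(μ i / (1 - q * μ i))) q :=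
    HasDerivAt.fun_sum fun i _ => by
      simpa [neg_div] using (((hasDerivAt_id q).mul_const (μ i)).const_sub 1).log (hq' i)
  rw [hA.trace_mul_inv_one_sub_smul hq', ← Finset.sum_neg_distrib]
  refine hsum.congr_of_eventuallyEq ?_
  filter_upwards [hnear] with t ht
  rw [hA.det_one_sub_smul, log_prod fun i _ => ht i]

end IsHermitian

lemma PosSemidef.trace_mul_inv_one_sub_smul_nonneg {n : Type*} [Fintype n] [DecidableEq n]
    {A : Matrix n n ℝ} (hA : A.PosSemidef) {t : ℝ}
    (ht : ∀ i, 0 < 1 - t * hA.isHermitian.eigenvalues i) :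
    0 ≤ (A * (1 - t • A)⁻¹).trace := by
  rw [hA.isHermitian.trace_mul_inv_one_sub_smul fun i => (ht i).ne']
  exact Finset.sum_nonneg fun i _ => div_nonneg (hA.eigenvalues_nonneg i) (ht i).le

end Matrix

lemma one_sub_mul_pos_of_lt_inv {q x y : ℝ} (hq0 : 0 ≤ q) (hq : q < y⁻¹) (hx : x ≤ y) :
    0 < 1 - q * x := by
  have hy : 0 < y := inv_pos.1 (hq0.trans_lt hq)
  have hqy : q * y < 1 := by rwa [← one_div, lt_div_iff₀ hy] at hq
  nlinarith

section

variable {s ℓ : ℕ} (F : Matrix (Fin s) (Fin ℓ) ℝ)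

lemma sqrt_sum_mulVec_sq_le_sigmaMax {w : Fin ℓ → ℝ} (hw : ∑ i, w i ^ 2 = 1) :
    √(∑ j, (F *ᵥ w) j ^ 2) ≤ sigmaMax F := by
  refine le_csSup ⟨√(∑ j, ∑ i, F j i ^ 2), ?_⟩ ⟨w, hw, rfl⟩
  rintro x ⟨v, hv, rfl⟩
  refine Real.sqrt_le_sqrt (Finset.sum_le_sum fun j _ => ?_)
  calc (F *ᵥ v) j ^ 2 = (∑ i, F j i * v i) ^ 2 := rfl
    _ ≤ (∑ i, F j i ^ 2) * ∑ i, v i ^ 2 := Finset.sum_mul_sq_le_sq_mul_sq _ _ _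
    _ = ∑ i, F j i ^ 2 := by rw [hv, mul_one]

lemma eigenvalues_le_sigmaMax_sq (hΛ : (Fᵀ * F).IsHermitian) (i : Fin ℓ) :
    hΛ.eigenvalues i ≤ sigmaMax F ^ 2 := by
  set v : Fin ℓ → ℝ := ⇑(hΛ.eigenvectorBasis i)
  have hv : ∑ j, v j ^ 2 = 1 := by
    have h := hΛ.eigenvectorBasis.orthonormal.1 i
    rw [EuclideanSpace.norm_eq, Real.sqrt_eq_one] at h
    simpa [v] using h
  have hμ : hΛ.eigenvalues i = ∑ j, (F *ᵥ v) j ^ 2 := by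
    rw [hΛ.eigenvalues_eq, ← mulVec_mulVec, dotProduct_mulVec, vecMul_transpose]
    simp [v, dotProduct, sq]
  calc hΛ.eigenvalues i = √(∑ j, (F *ᵥ v) j ^ 2) ^ 2 := by
        rw [Real.sq_sqrt (by positivity), hμ]
    _ ≤ sigmaMax F ^ 2 := by
        gcongr
        exact sqrt_sum_mulVec_sq_le_sigmaMax F hv

lemma pos_of_sigmaMax_pos (h : 0 < sigmaMax F) : 0 < ℓ := by
  rcases Nat.eq_zero_or_pos ℓ with rfl | hℓ
  · simp [sigmaMax] at h
  · exact hℓ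

lemma hasDerivAt_AAfun {γ q : ℝ} (hdet : (1 - q • (Fᵀ * F)).det ≠ 0)
    (hγ : 1 - q * γ ^ 2 ≠ 0) :
    HasDerivAt (fun t => AAfun F t γ)
      ((-(Fᵀ * F * Sq F q).trace + ℓ * γ ^ 2 / (1 - q * γ ^ 2)) / 2) q := by
  have hlogdet := (posSemidef_transpose_mul_self F).isHermitian.hasDerivAt_log_det_one_sub_smul hdet
  have hlog := (((hasDerivAt_id' q).mul_const (γ ^ 2)).const_sub 1).log hγ
  exact ((hlogdet.const_mul (1 / 2)).fun_sub (hlog.const_mul (ℓ / 2 : ℝ))).congr_deriv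
    (by rw [Sq]; ring)

end

/-- For fixed `γ ∈ [0, σ_max(F))`, the partial derivative of `𝔄(q,γ)` in `q` at
any `q ∈ [0, σ_max(F)^{−2})` equals
`ℓ(γ² − 𝒩(q)²)/(2(1 − qγ²)(1 − q𝒩(q)²))`. -/
theorem AAfun_deriv
    (s ℓ : ℕ) (F : Matrix (Fin s) (Fin ℓ) ℝ)
    (γ : ℝ) (hγ : γ ∈ Set.Ico 0 (sigmaMax F)) :
    ∀ q ∈ Set.Ico (0 : ℝ) ((sigmaMax F ^ 2)⁻¹),
      HasDerivAt (fun t : ℝ => AAfun F t γ)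
        ((ℓ : ℝ) * (γ^2 - Nfun F q ^ 2) /
          (2 * (1 - q * γ^2) * (1 - q * Nfun F q ^ 2))) q := by
  rintro q ⟨hq0, hqσ⟩
  have hPSD := posSemidef_transpose_mul_self F
  have hℓ : (0 : ℝ) < ℓ := by exact_mod_cast pos_of_sigmaMax_pos F (hγ.1.trans_lt hγ.2)
  have hμ (i : Fin ℓ) : 0 < 1 - q * hPSD.isHermitian.eigenvalues i :=
    one_sub_mul_pos_of_lt_inv hq0 hqσ (eigenvalues_le_sigmaMax_sq F _ i)
  have hc : 0 < 1 - q * γ ^ 2 :=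
    one_sub_mul_pos_of_lt_inv hq0 hqσ (pow_le_pow_left₀ hγ.1 hγ.2.le 2)
  have hdet : (1 - q • (Fᵀ * F)).det ≠ 0 := by
    rw [hPSD.isHermitian.det_one_sub_smul]
    exact Finset.prod_ne_zero_iff.2 fun i _ => (hμ i).ne'
  set a := (Fᵀ * F * Sq F q).trace
  set b := (Sq F q).trace
  have ha : 0 ≤ a := hPSD.trace_mul_inv_one_sub_smul_nonneg hμ
  have hab : b = ℓ + q * a := by
    have h := trace_inv_one_sub_smul (isUnit_iff_ne_zero.2 hdet)
    rwa [Fintype.card_fin] at h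
  have hb : 0 < b := by rw [hab]; positivity
  have hN : Nfun F q ^ 2 = a / b := sq_sqrt (div_nonneg ha hb.le)
  have hqN : 1 - q * (a / b) = ℓ / b := by field_simp; linear_combination hab
  refine (hasDerivAt_AAfun F hdet hc.ne').congr_deriv ?_
  rw [hN, hqN]
  generalize hc_def : 1 - q * γ ^ 2 = c at hc ⊢
  field_simp
  linear_combination -γ ^ 2 * hab + a * hc_def
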